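/- Let Ω ⊂ ℝ^m be bounded and measurable, w a synaptic kernel, f and g an activation function and a learning modulation function with Lipschitz constants L and K, and γ ≥ 0 fixed. Then there exist ρ > 0 and a constant C = C(ρ) such that whenever u and v are solutions in C([0,ρ]; L¹(Ω)) of the initial value problem u_t(x,t) = −u(x,t) + ∫_Ω w(x,y)[1 + γ g(u(x,t) − u(y,t))] f(u(y,t)) dy with initial data u_0 and v_0 in L¹(Ω) respectively, one has sup_{t∈[0,ρ]} ‖u(·,t) − v(·,t)‖_{L¹(Ω)} ≤ C ‖u_0 − v_0‖_{L¹(Ω)}. -/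

import Mathlib

/-! On `[0, ρ]` the difference `hₓ = u(x, ·) - v(x, ·)` satisfies, pointwise in `x`,
`|hₓ'| ≤ (1 + γ K C_w) |hₓ| + c A` with `c = ((1 + γ) L + γ K) C_∞` and
`A(t) = ‖u(·, t) - v(·, t)‖_{L¹(Ω)}`, by the Lipschitz bounds on `f` and `g`. Bounding `|hₓ|` and
`A` by their maxima on `[0, ρ]`, the mean value inequality gives
`max |hₓ| ≤ 2 |hₓ(0)| + 2 ρ c max A`; integrating over `Ω`,
`max A ≤ 2 A(0) + 2 ρ c |Ω| max A`. For `ρ` small both terms can be absorbed, so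
`max A ≤ 4 A(0)`. -/

open MeasureTheory Set Filter Topology
open scoped NNReal ENNReal

lemma abs_one_add_mul_le {γ t : ℝ} (hγ : 0 ≤ γ) (ht : 0 ≤ t ∧ t ≤ 1) : |1 + γ * t| ≤ 1 + γ :=
  abs_le.2 ⟨by nlinarith, by nlinarith⟩

lemma abs_synapticIntegrand_sub_le {f g : ℝ → ℝ} {Lf Lg : ℝ≥0} (hf : LipschitzWith Lf f)
    (hg : LipschitzWith Lg g) (hf01 : ∀ s, 0 ≤ f s ∧ f s ≤ 1) (hg01 : ∀ s, 0 ≤ g s ∧ g s ≤ 1)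
    {γ : ℝ} (hγ : 0 ≤ γ) (W a b a' b' : ℝ) :
    |W * (1 + γ * g (a - b)) * f b - W * (1 + γ * g (a' - b')) * f b'| ≤
      |W| * (((1 + γ) * Lf + γ * Lg) * |b - b'| + γ * Lg * |a - a'|) := by
  have hf_sub : |f b - f b'| ≤ Lf * |b - b'| := by
    simpa only [Real.dist_eq] using hf.dist_le_mul b b'
  have hg_sub : |g (a - b) - g (a' - b')| ≤ Lg * (|a - a'| + |b - b'|) :=
    calc _ ≤ Lg * |(a - a') - (b - b')| := by
          simpa only [Real.dist_eq, sub_sub_sub_comm] using hg.dist_le_mul (a - b) (a' - b')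
      _ ≤ _ := by gcongr; exact abs_sub _ _
  have hf_le : |f b'| ≤ 1 := abs_le.2 ⟨by linarith [(hf01 b').1], (hf01 b').2⟩
  calc |W * (1 + γ * g (a - b)) * f b - W * (1 + γ * g (a' - b')) * f b'|
      = |W| * |(1 + γ * g (a - b)) * (f b - f b') + γ * (g (a - b) - g (a' - b')) * f b'| := by
        rw [← abs_mul]; congr 1; ring
    _ ≤ |W| * ((1 + γ) * (Lf * |b - b'|) + γ * (Lg * (|a - a'| + |b - b'|)) * 1) := by
        gcongr
        refine (abs_add_le _ _).trans ?_
        rw [abs_mul, abs_mul, abs_mul, abs_of_nonneg hγ]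
        gcongr
        exact abs_one_add_mul_le hγ (hg01 _)
    _ = _ := by ring

variable {X : Type*} [MeasurableSpace X] {μ : Measure X} {Ω : Set X}

lemma integrableOn_synapticIntegrand {w : X → X → ℝ} {f g : ℝ → ℝ} {γ : ℝ} (hf : Continuous f)
    (hg : Continuous g) (hf01 : ∀ s, 0 ≤ f s ∧ f s ≤ 1) (hg01 : ∀ s, 0 ≤ g s ∧ g s ≤ 1)
    (hγ : 0 ≤ γ) {x : X} (hw : Integrable (w x) μ) {φ : X → ℝ}
    (hφ : AEStronglyMeasurable φ (μ.restrict Ω)) :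
    IntegrableOn (fun y => w x y * (1 + γ * g (φ x - φ y)) * f (φ y)) Ω μ := by
  refine (hw.integrableOn.abs.const_mul (1 + γ)).mono ?_ (ae_of_all _ fun y => ?_)
  · exact (hw.aestronglyMeasurable.restrict.mul (aestronglyMeasurable_const.add
      (aestronglyMeasurable_const.mul (hg.comp_aestronglyMeasurable
        (aestronglyMeasurable_const.sub hφ))))).mul (hf.comp_aestronglyMeasurable hφ)
  · rw [Real.norm_eq_abs, Real.norm_eq_abs, abs_mul, abs_mul,
      abs_of_nonneg (mul_nonneg (by linarith : (0:ℝ) ≤ 1 + γ) (abs_nonneg (w x y)))]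
    calc _ ≤ |w x y| * (1 + γ) * 1 := by
          gcongr
          · exact abs_one_add_mul_le hγ (hg01 _)
          · exact abs_le.2 ⟨by linarith [(hf01 (φ y)).1], (hf01 (φ y)).2⟩
      _ = _ := by ring

noncomputable def synapticInput (μ : Measure X) (Ω : Set X) (w : X → X → ℝ) (f g : ℝ → ℝ)
    (γ : ℝ) (φ : X → ℝ) (x : X) : ℝ :=
  ∫ y in Ω, w x y * (1 + γ * g (φ x - φ y)) * f (φ y) ∂μ

structure IsBoundedKernel (μ : Measure X) (w : X → X → ℝ) (Cinf Cw : ℝ) : Prop where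
  integrable : ∀ x, Integrable (w x) μ
  abs_le : ∀ x y, |w x y| ≤ Cinf
  integral_abs_le : ∀ x, ∫ y, |w x y| ∂μ ≤ Cw

lemma IsBoundedKernel.abs_synapticInput_sub_le {w : X → X → ℝ} {Cinf Cw : ℝ}
    (hw : IsBoundedKernel μ w Cinf Cw) {f g : ℝ → ℝ} {Lf Lg : ℝ≥0} (hf : LipschitzWith Lf f)
    (hg : LipschitzWith Lg g) (hf01 : ∀ s, 0 ≤ f s ∧ f s ≤ 1) (hg01 : ∀ s, 0 ≤ g s ∧ g s ≤ 1)
    {γ : ℝ} (hγ : 0 ≤ γ) {φ ψ : X → ℝ} (hφ : IntegrableOn φ Ω μ) (hψ : IntegrableOn ψ Ω μ)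
    (x : X) :
    |synapticInput μ Ω w f g γ φ x - synapticInput μ Ω w f g γ ψ x| ≤
      ((1 + γ) * Lf + γ * Lg) * Cinf * ∫ y in Ω, |φ y - ψ y| ∂μ + γ * Lg * Cw * |φ x - ψ x| := by
  set c := (1 + γ) * (Lf : ℝ) + γ * Lg
  set d := γ * Lg * |φ x - ψ x|
  have hd : 0 ≤ d := by positivity
  have hF := integrableOn_synapticIntegrand hf.continuous hg.continuous hf01 hg01 hγ
    (hw.integrable x) hφ.aestronglyMeasurable
  have hG := integrableOn_synapticIntegrand hf.continuous hg.continuous hf01 hg01 hγ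
    (hw.integrable x) hψ.aestronglyMeasurable
  have hwΩ : IntegrableOn (fun y => |w x y|) Ω μ := (hw.integrable x).integrableOn.abs
  have hφψ : IntegrableOn (fun y => |φ y - ψ y|) Ω μ := (hφ.sub hψ).abs
  calc |synapticInput μ Ω w f g γ φ x - synapticInput μ Ω w f g γ ψ x|
      = |∫ y in Ω, (w x y * (1 + γ * g (φ x - φ y)) * f (φ y) -
          w x y * (1 + γ * g (ψ x - ψ y)) * f (ψ y)) ∂μ| := by
        rw [synapticInput, synapticInput, integral_sub hF hG]
    _ ≤ ∫ y in Ω, |w x y * (1 + γ * g (φ x - φ y)) * f (φ y) -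
          w x y * (1 + γ * g (ψ x - ψ y)) * f (ψ y)| ∂μ := abs_integral_le_integral_abs
    _ ≤ ∫ y in Ω, (c * Cinf * |φ y - ψ y| + d * |w x y|) ∂μ := by
        refine setIntegral_mono (hF.sub hG).abs
          ((hφψ.const_mul _).add (hwΩ.const_mul _)) fun y => ?_
        calc _ ≤ |w x y| * (c * |φ y - ψ y| + d) :=
              abs_synapticIntegrand_sub_le hf hg hf01 hg01 hγ _ _ _ _ _
          _ = c * (|w x y| * |φ y - ψ y|) + d * |w x y| := by ring
          _ ≤ c * (Cinf * |φ y - ψ y|) + d * |w x y| := by gcongr; exact hw.abs_le x y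
          _ = _ := by ring
    _ = c * Cinf * ∫ y in Ω, |φ y - ψ y| ∂μ + d * ∫ y in Ω, |w x y| ∂μ := by
        rw [integral_add (hφψ.const_mul _) (hwΩ.const_mul _), integral_const_mul,
          integral_const_mul]
    _ ≤ c * Cinf * ∫ y in Ω, |φ y - ψ y| ∂μ + d * Cw := by
        gcongr
        exact (setIntegral_le_integral (hw.integrable x).abs
          (ae_of_all _ fun _ => abs_nonneg _)).trans (hw.integral_abs_le x)
    _ = _ := by ring

lemma abs_integral_abs_sub_integral_abs_le {a b : X → ℝ} (ha : Integrable a μ)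
    (hb : Integrable b μ) : |∫ x, |a x| ∂μ - ∫ x, |b x| ∂μ| ≤ ∫ x, |a x - b x| ∂μ := by
  rw [← integral_sub ha.abs hb.abs]
  exact abs_integral_le_integral_abs.trans
    (integral_mono (ha.abs.sub hb.abs).abs (ha.sub hb).abs fun x => abs_abs_sub_abs_le_abs_sub _ _)

lemma continuousOn_setIntegral_abs_sub {u v : X → ℝ → ℝ} {s : Set ℝ}
    (hu : ∀ t ∈ s, IntegrableOn (u · t) Ω μ) (hv : ∀ t ∈ s, IntegrableOn (v · t) Ω μ)
    (hu_cont : ∀ t ∈ s, Tendsto (fun τ => ∫ x in Ω, |u x τ - u x t| ∂μ) (𝓝[s] t) (𝓝 0))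
    (hv_cont : ∀ t ∈ s, Tendsto (fun τ => ∫ x in Ω, |v x τ - v x t| ∂μ) (𝓝[s] t) (𝓝 0)) :
    ContinuousOn (fun t => ∫ x in Ω, |u x t - v x t| ∂μ) s := by
  intro t ht
  rw [ContinuousWithinAt, tendsto_iff_norm_sub_tendsto_zero]
  refine squeeze_zero' (Eventually.of_forall fun _ => norm_nonneg _) ?_
    (by simpa using (hu_cont t ht).add (hv_cont t ht))
  filter_upwards [self_mem_nhdsWithin] with τ hτ
  have huτ := (hu τ hτ).sub (hu t ht)
  have hvτ := (hv τ hτ).sub (hv t ht)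
  calc _ ≤ ∫ x in Ω, |(u x τ - v x τ) - (u x t - v x t)| ∂μ :=
        abs_integral_abs_sub_integral_abs_le ((hu τ hτ).sub (hv τ hτ)) ((hu t ht).sub (hv t ht))
    _ ≤ ∫ x in Ω, (|u x τ - u x t| + |v x τ - v x t|) ∂μ := by
        refine integral_mono (((hu τ hτ).sub (hv τ hτ)).sub ((hu t ht).sub (hv t ht))).abs
          (huτ.abs.add hvτ.abs) fun x => ?_
        rw [sub_sub_sub_comm]
        exact abs_sub _ _
    _ = _ := integral_add huτ.abs hvτ.abs

lemma abs_le_of_hasDerivWithinAt_of_abs_deriv_le {h D : ℝ → ℝ} {ρ a b : ℝ} (ha : 0 ≤ a)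
    (hρa : ρ * a ≤ 1 / 2) (hh : ∀ s ∈ Icc 0 ρ, HasDerivWithinAt h (D s) (Icc 0 ρ) s)
    (hD : ∀ s ∈ Icc 0 ρ, |D s| ≤ a * |h s| + b) {t : ℝ} (ht : t ∈ Icc 0 ρ) :
    |h t| ≤ 2 * |h 0| + 2 * ρ * b := by
  have hcont : ContinuousOn h (Icc 0 ρ) := fun s hs => (hh s hs).continuousWithinAt
  obtain ⟨σ, hσ, hmax⟩ := isCompact_Icc.exists_isMaxOn ⟨t, ht⟩ hcont.abs
  have hDσ : ∀ s ∈ Icc 0 ρ, |D s| ≤ a * |h σ| + b := fun s hs =>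
    (hD s hs).trans (by linarith [mul_le_mul_of_nonneg_left (hmax hs : |h s| ≤ |h σ|) ha])
  have hmvt : |h σ - h 0| ≤ (a * |h σ| + b) * (σ - 0) :=
    norm_image_sub_le_of_norm_deriv_le_segment' hh (fun s hs => hDσ s (Ico_subset_Icc_self hs)) σ hσ
  have hσρ : (a * |h σ| + b) * σ ≤ (a * |h σ| + b) * ρ :=
    mul_le_mul_of_nonneg_left hσ.2 ((abs_nonneg _).trans (hDσ σ hσ))
  have hhalf : ρ * a * |h σ| ≤ 1 / 2 * |h σ| := mul_le_mul_of_nonneg_right hρa (abs_nonneg _)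
  have hσ0 := abs_sub_abs_le_abs_sub (h σ) (h 0)
  have htσ : |h t| ≤ |h σ| := hmax ht
  linarith

/-- `u ∈ C([0, ρ]; L¹(Ω))` solving `∂ₜu(x, t) = -u(x, t) + synapticInput (u(·, t)) x` on `Ω`. -/
structure IsPlasticFieldSolution (μ : Measure X) (Ω : Set X) (w : X → X → ℝ) (f g : ℝ → ℝ)
    (γ ρ : ℝ) (u : X → ℝ → ℝ) : Prop where
  integrableOn : ∀ t ∈ Icc 0 ρ, IntegrableOn (u · t) Ω μ
  tendsto_setIntegral_abs_sub : ∀ t ∈ Icc 0 ρ,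
    Tendsto (fun s => ∫ x in Ω, |u x s - u x t| ∂μ) (𝓝[Icc 0 ρ] t) (𝓝 0)
  hasDerivWithinAt : ∀ x ∈ Ω, ∀ t ∈ Icc 0 ρ,
    HasDerivWithinAt (u x) (-u x t + synapticInput μ Ω w f g γ (u · t) x) (Icc 0 ρ) t

namespace IsPlasticFieldSolution

variable {w : X → X → ℝ} {Cinf Cw : ℝ} {f g : ℝ → ℝ} {Lf Lg : ℝ≥0} {γ ρ : ℝ}
  {u v : X → ℝ → ℝ}

theorem abs_sub_le (hu : IsPlasticFieldSolution μ Ω w f g γ ρ u)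
    (hv : IsPlasticFieldSolution μ Ω w f g γ ρ v) (hw : IsBoundedKernel μ w Cinf Cw)
    (hf : LipschitzWith Lf f) (hg : LipschitzWith Lg g) (hf01 : ∀ s, 0 ≤ f s ∧ f s ≤ 1)
    (hg01 : ∀ s, 0 ≤ g s ∧ g s ≤ 1) (hγ : 0 ≤ γ) (hρ : ρ * (1 + γ * Lg * Cw) ≤ 1 / 2) {S : ℝ}
    (hS : ∀ s ∈ Icc 0 ρ, ∫ y in Ω, |u y s - v y s| ∂μ ≤ S) {x : X} (hx : x ∈ Ω) {t : ℝ}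
    (ht : t ∈ Icc 0 ρ) :
    |u x t - v x t| ≤ 2 * |u x 0 - v x 0| + 2 * ρ * (((1 + γ) * Lf + γ * Lg) * Cinf * S) := by
  have hCinf : 0 ≤ Cinf := (abs_nonneg _).trans (hw.abs_le x x)
  have hCw : 0 ≤ Cw := (integral_nonneg fun _ => abs_nonneg _).trans (hw.integral_abs_le x)
  refine abs_le_of_hasDerivWithinAt_of_abs_deriv_le (h := fun σ => u x σ - v x σ)
    (by positivity) hρ
    (fun s hs => (hu.hasDerivWithinAt x hx s hs).sub (hv.hasDerivWithinAt x hx s hs))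
    (fun s hs => ?_) ht
  have hinput := hw.abs_synapticInput_sub_le hf hg hf01 hg01 hγ (hu.integrableOn s hs)
    (hv.integrableOn s hs) x
  have hS' := mul_le_mul_of_nonneg_left (hS s hs)
    (by positivity : 0 ≤ ((1 + γ) * Lf + γ * Lg) * Cinf)
  calc _ = |-(u x s - v x s) + (synapticInput μ Ω w f g γ (u · s) x -
        synapticInput μ Ω w f g γ (v · s) x)| := by congr 1; ring
    _ ≤ |u x s - v x s| + |synapticInput μ Ω w f g γ (u · s) x -
        synapticInput μ Ω w f g γ (v · s) x| := by
        simpa only [abs_neg] using abs_add_le (-(u x s - v x s)) _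
    _ ≤ _ := by linarith

theorem setIntegral_abs_sub_le (hΩ : MeasurableSet Ω) (hΩ_fin : μ Ω ≠ ∞)
    (hu : IsPlasticFieldSolution μ Ω w f g γ ρ u) (hv : IsPlasticFieldSolution μ Ω w f g γ ρ v)
    (hw : IsBoundedKernel μ w Cinf Cw) (hf : LipschitzWith Lf f) (hg : LipschitzWith Lg g)
    (hf01 : ∀ s, 0 ≤ f s ∧ f s ≤ 1) (hg01 : ∀ s, 0 ≤ g s ∧ g s ≤ 1) (hγ : 0 ≤ γ)
    (hρ₁ : ρ * (1 + γ * Lg * Cw) ≤ 1 / 2)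
    (hρ₂ : ρ * (2 * (((1 + γ) * Lf + γ * Lg) * Cinf) * μ.real Ω) ≤ 1 / 2) {t : ℝ}
    (ht : t ∈ Icc 0 ρ) :
    ∫ x in Ω, |u x t - v x t| ∂μ ≤ 4 * ∫ x in Ω, |u x 0 - v x 0| ∂μ := by
  set A := fun s => ∫ x in Ω, |u x s - v x s| ∂μ
  set c := ((1 + γ) * Lf + γ * Lg) * Cinf
  have h0 : (0 : ℝ) ∈ Icc 0 ρ := ⟨le_rfl, ht.1.trans ht.2⟩
  have hA : ContinuousOn A (Icc 0 ρ) := continuousOn_setIntegral_abs_sub hu.integrableOn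
    hv.integrableOn hu.tendsto_setIntegral_abs_sub hv.tendsto_setIntegral_abs_sub
  obtain ⟨tmax, htmax, hmax⟩ := isCompact_Icc.exists_isMaxOn ⟨t, ht⟩ hA
  have hint : ∀ s ∈ Icc 0 ρ, IntegrableOn (fun x => |u x s - v x s|) Ω μ := fun s hs =>
    ((hu.integrableOn s hs).sub (hv.integrableOn s hs)).abs
  have hbound : A tmax ≤ 2 * A 0 + ρ * (2 * c * μ.real Ω) * A tmax :=
    calc A tmax ≤ ∫ x in Ω, (2 * |u x 0 - v x 0| + 2 * ρ * (c * A tmax)) ∂μ :=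
          setIntegral_mono_on (hint tmax htmax)
            (((hint 0 h0).const_mul 2).add (integrableOn_const hΩ_fin)) hΩ
            fun x hx => hu.abs_sub_le hv hw hf hg hf01 hg01 hγ hρ₁ (fun s hs => hmax hs) hx htmax
      _ = 2 * A 0 + ρ * (2 * c * μ.real Ω) * A tmax := by
          rw [integral_add ((hint 0 h0).const_mul 2) (integrableOn_const hΩ_fin),
            integral_const_mul, setIntegral_const, smul_eq_mul]
          ring
  have hAmax : 0 ≤ A tmax := setIntegral_nonneg_of_ae (ae_of_all _ fun _ => abs_nonneg _)
  calc A t ≤ A tmax := hmax ht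
    _ ≤ 4 * A 0 := by linarith [mul_le_mul_of_nonneg_right hρ₂ hAmax]

end IsPlasticFieldSolution

lemma exists_pos_mul_le_half (a b : ℝ) : ∃ ρ > 0, ρ * a ≤ 1 / 2 ∧ ρ * b ≤ 1 / 2 := by
  refine ⟨1 / (2 * (|a| + |b| + 1)), by positivity, ?_, ?_⟩ <;>
  · rw [div_mul_eq_mul_div, one_mul, div_le_iff₀ (by positivity)]
    linarith [le_abs_self a, le_abs_self b, abs_nonneg a, abs_nonneg b]

theorem stmt_15_general {m : ℕ}
    (Ω : Set (Fin m → ℝ)) (hΩ_meas : MeasurableSet Ω) (hΩ_bdd : Bornology.IsBounded Ω)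
    (w : (Fin m → ℝ) → (Fin m → ℝ) → ℝ)
    (Cinf Cw : ℝ)
    (hw_bdd : ∀ x y, |w x y| ≤ Cinf)
    (hw_int : ∀ x, Integrable fun y => w x y)
    (hw_L1 : ∀ x, (∫ y, |w x y|) ≤ Cw)
    (f g : ℝ → ℝ)
    (hf_range : ∀ s, 0 ≤ f s ∧ f s ≤ 1)
    (hg_range : ∀ s, 0 ≤ g s ∧ g s ≤ 1)
    (L K : ℝ)
    (hf_lip : ∀ a b, |f a - f b| ≤ L * |a - b|)
    (hg_lip : ∀ a b, |g a - g b| ≤ K * |a - b|)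
    (γ : ℝ) (hγ : 0 ≤ γ) :
    ∃ ρ > (0:ℝ), ∃ C > (0:ℝ),
      ∀ (u₀ v₀ : (Fin m → ℝ) → ℝ), IntegrableOn u₀ Ω → IntegrableOn v₀ Ω →
      ∀ (u v : (Fin m → ℝ) → ℝ → ℝ),
        Measurable (Function.uncurry u) → Measurable (Function.uncurry v) →
        (∀ t ∈ Icc (0:ℝ) ρ, IntegrableOn (fun x => u x t) Ω) →
        (∀ t ∈ Icc (0:ℝ) ρ, IntegrableOn (fun x => v x t) Ω) →
        (∀ t ∈ Icc (0:ℝ) ρ,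
          Filter.Tendsto (fun s => ∫ x in Ω, |u x s - u x t|)
            (nhdsWithin t (Icc 0 ρ)) (nhds 0)) →
        (∀ t ∈ Icc (0:ℝ) ρ,
          Filter.Tendsto (fun s => ∫ x in Ω, |v x s - v x t|)
            (nhdsWithin t (Icc 0 ρ)) (nhds 0)) →
        (∀ x ∈ Ω, u x 0 = u₀ x) → (∀ x ∈ Ω, v x 0 = v₀ x) →
        (∀ x ∈ Ω, ∀ t ∈ Icc (0:ℝ) ρ,
          HasDerivWithinAt (u x)
            (-(u x t) + ∫ y in Ω, w x y * (1 + γ * g (u x t - u y t)) * f (u y t))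
            (Icc 0 ρ) t) →
        (∀ x ∈ Ω, ∀ t ∈ Icc (0:ℝ) ρ,
          HasDerivWithinAt (v x)
            (-(v x t) + ∫ y in Ω, w x y * (1 + γ * g (v x t - v y t)) * f (v y t))
            (Icc 0 ρ) t) →
        ∀ t ∈ Icc (0:ℝ) ρ,
          (∫ x in Ω, |u x t - v x t|) ≤ C * ∫ x in Ω, |u₀ x - v₀ x| := by
  have hf : LipschitzWith L.toNNReal f := .of_dist_le' (by simpa only [Real.dist_eq] using hf_lip)
  have hg : LipschitzWith K.toNNReal g := .of_dist_le' (by simpa only [Real.dist_eq] using hg_lip)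
  have hw : IsBoundedKernel volume w Cinf Cw := ⟨hw_int, hw_bdd, hw_L1⟩
  obtain ⟨ρ, hρ, hρ₁, hρ₂⟩ := exists_pos_mul_le_half (1 + γ * K.toNNReal * Cw)
    (2 * (((1 + γ) * L.toNNReal + γ * K.toNNReal) * Cinf) * volume.real Ω)
  refine ⟨ρ, hρ, 4, by norm_num, fun u₀ v₀ _ _ u v _ _ hu_int hv_int hu_cont hv_cont hu₀ hv₀
    hu_ode hv_ode t ht => ?_⟩
  calc ∫ x in Ω, |u x t - v x t|
      ≤ 4 * ∫ x in Ω, |u x 0 - v x 0| :=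
        IsPlasticFieldSolution.setIntegral_abs_sub_le hΩ_meas hΩ_bdd.measure_lt_top.ne
          ⟨hu_int, hu_cont, hu_ode⟩ ⟨hv_int, hv_cont, hv_ode⟩ hw hf hg hf_range hg_range hγ
          hρ₁ hρ₂ ht
    _ = 4 * ∫ x in Ω, |u₀ x - v₀ x| := by
        congr 1
        exact setIntegral_congr_fun hΩ_meas fun x hx => by simp only [hu₀ x hx, hv₀ x hx]

/-- Continuous dependence on initial data in `L¹(Ω)`: for fixed `γ` there
exist `ρ > 0` and `C = C(ρ)` such that any two solutions `u, v ∈ C([0,ρ]; L¹(Ω))` of the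
plastic neural field IVP with initial data `u₀, v₀ ∈ L¹(Ω)` satisfy
`sup_{t ∈ [0,ρ]} ‖u(·,t) - v(·,t)‖_{L¹(Ω)} ≤ C ‖u₀ - v₀‖_{L¹(Ω)}`. -/
theorem stmt_15 {m : ℕ} (hm : 1 ≤ m)
    (Ω : Set (Fin m → ℝ)) (hΩ_meas : MeasurableSet Ω) (hΩ_bdd : Bornology.IsBounded Ω)
    (w : (Fin m → ℝ) → (Fin m → ℝ) → ℝ)
    (Cinf Cw Kw : ℝ) (hCw : 0 < Cw) (hKw : 0 < Kw)
    (hw_meas : Measurable (Function.uncurry w))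
    (hw_bdd : ∀ x y, |w x y| ≤ Cinf)
    (hw_int : ∀ x, Integrable fun y => w x y)
    (hw_L1 : ∀ x, (∫ y, |w x y|) ≤ Cw)
    (hw_lip : ∀ x x', (∫ y, |w x y - w x' y|) ≤ Kw * ‖x - x'‖)
    (f g : ℝ → ℝ)
    (hf_smooth : ContDiff ℝ 1 f) (hf_deriv : ∃ B, ∀ s, |deriv f s| ≤ B)
    (hf_range : ∀ s, 0 ≤ f s ∧ f s ≤ 1)
    (hg_smooth : ContDiff ℝ 1 g) (hg_deriv : ∃ B, ∀ s, |deriv g s| ≤ B)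
    (hg_range : ∀ s, 0 ≤ g s ∧ g s ≤ 1)
    (L K : ℝ) (hL : 0 ≤ L) (hK : 0 ≤ K)
    (hf_lip : ∀ a b, |f a - f b| ≤ L * |a - b|)
    (hg_lip : ∀ a b, |g a - g b| ≤ K * |a - b|)
    (γ : ℝ) (hγ : 0 ≤ γ) :
    ∃ ρ > (0:ℝ), ∃ C > (0:ℝ),
      ∀ (u₀ v₀ : (Fin m → ℝ) → ℝ), IntegrableOn u₀ Ω → IntegrableOn v₀ Ω →
      ∀ (u v : (Fin m → ℝ) → ℝ → ℝ),
        Measurable (Function.uncurry u) → Measurable (Function.uncurry v) →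
        (∀ t ∈ Icc (0:ℝ) ρ, IntegrableOn (fun x => u x t) Ω) →
        (∀ t ∈ Icc (0:ℝ) ρ, IntegrableOn (fun x => v x t) Ω) →
        (∀ t ∈ Icc (0:ℝ) ρ,
          Filter.Tendsto (fun s => ∫ x in Ω, |u x s - u x t|)
            (nhdsWithin t (Icc 0 ρ)) (nhds 0)) →
        (∀ t ∈ Icc (0:ℝ) ρ,
          Filter.Tendsto (fun s => ∫ x in Ω, |v x s - v x t|)
            (nhdsWithin t (Icc 0 ρ)) (nhds 0)) →
        (∀ x ∈ Ω, u x 0 = u₀ x) → (∀ x ∈ Ω, v x 0 = v₀ x) →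
        (∀ x ∈ Ω, ∀ t ∈ Icc (0:ℝ) ρ,
          HasDerivWithinAt (u x)
            (-(u x t) + ∫ y in Ω, w x y * (1 + γ * g (u x t - u y t)) * f (u y t))
            (Icc 0 ρ) t) →
        (∀ x ∈ Ω, ∀ t ∈ Icc (0:ℝ) ρ,
          HasDerivWithinAt (v x)
            (-(v x t) + ∫ y in Ω, w x y * (1 + γ * g (v x t - v y t)) * f (v y t))
            (Icc 0 ρ) t) →
        ∀ t ∈ Icc (0:ℝ) ρ,
          (∫ x in Ω, |u x t - v x t|) ≤ C * ∫ x in Ω, |u₀ x - v₀ x| :=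
  stmt_15_general Ω hΩ_meas hΩ_bdd w Cinf Cw hw_bdd hw_int hw_L1 f g hf_range hg_range L K hf_lip
    hg_lip γ hγ
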